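/- For Q = [a,b,c] with real coefficients, k > 0 integer, and z ∈ ℍ with Q(z,1) ≠ 0 and Q(z̄,1) ≠ 0, the function h(z) = Q_z/Q(z,1)^{k+1} satisfies Δ_{2k+2} h = 2k·h, where Δ_κ = −y²(∂²_x + ∂²_y) + iκy(∂_x + i∂_y) is the weight-κ hyperbolic Laplacian. -/

import Mathlib

/-!
With `Q' = 2az + b` one has `y Q_z = Q(z,1) - i y Q'(z)`, so `h = A / y + B` with
`A = Q^{-k}` and `B = -i Q' Q^{-k-1}` holomorphic near `z`. The operator `Δ_κ` annihilates
holomorphic functions and sends `A / y` to `2i A' + (κ - 2) A / y`; for `κ = 2k + 2` and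
`A' = -k Q' Q^{-k-1}` this is `2k (A / y + B) = 2k h`.
-/

open Complex

/-- Weight-`κ` hyperbolic Laplacian
`Δ_κ = -y²(∂²_x + ∂²_y) + iκy(∂_x + i∂_y)`, evaluated at `z`. -/
noncomputable def hypLaplacian (κ : ℝ) (f : ℂ → ℂ) (z : ℂ) : ℂ :=
  -(z.im : ℂ) ^ 2 *
      (iteratedDeriv 2 (fun x : ℝ => f ((x : ℂ) + z.im * Complex.I)) z.re
        + iteratedDeriv 2 (fun y : ℝ => f ((z.re : ℂ) + y * Complex.I)) z.im)
    + Complex.I * (κ : ℂ) * (z.im : ℂ) *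
      (deriv (fun x : ℝ => f ((x : ℂ) + z.im * Complex.I)) z.re
        + Complex.I * deriv (fun y : ℝ => f ((z.re : ℂ) + y * Complex.I)) z.im)

/-- `Q(z,1) = a z² + b z + c`. -/
noncomputable def Qc (a b c : ℝ) (z : ℂ) : ℂ :=
  (a : ℂ) * z ^ 2 + (b : ℂ) * z + (c : ℂ)

/-- `Q_z = (a|z|² + b Re z + c)/Im z`. -/
noncomputable def Qzq (a b c : ℝ) (z : ℂ) : ℝ :=
  (a * ‖z‖ ^ 2 + b * z.re + c) / z.im

open Filter Topology

theorem iteratedDeriv_two_eq_of_hasDerivAt {𝕜 F : Type*} [NontriviallyNormedField 𝕜]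
    [NormedAddCommGroup F] [NormedSpace 𝕜 F] {f f' : 𝕜 → F} {f'' : F} {x : 𝕜}
    (hf : ∀ᶠ t in 𝓝 x, HasDerivAt f (f' t) t) (hf' : HasDerivAt f' f'' x) :
    iteratedDeriv 2 f x = f'' := by
  have hderiv : deriv f =ᶠ[𝓝 x] f' := hf.mono fun _ ht => ht.deriv
  rw [iteratedDeriv_succ, iteratedDeriv_one, hderiv.deriv_eq, hf'.deriv]

section Lines

variable {g : ℂ → ℂ} {x y : ℝ}

theorem HasDerivAt.comp_horizontal {g' : ℂ} (h : HasDerivAt g g' (x + y * I)) :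
    HasDerivAt (fun t : ℝ => g (t + y * I)) g' x :=
  (h.comp_add_const (x : ℂ) (y * I)).comp_ofReal

theorem HasDerivAt.comp_vertical {g' : ℂ} (h : HasDerivAt g g' (x + y * I)) :
    HasDerivAt (fun t : ℝ => g (x + t * I)) (g' * I) y := by
  have hline : HasDerivAt (fun t : ℝ => (x : ℂ) + t * I) I y := by
    simpa using ((hasDerivAt_id y).ofReal_comp.mul_const I).const_add (x : ℂ)
  exact h.comp y hline

theorem AnalyticAt.eventually_hasDerivAt_horizontal (hg : AnalyticAt ℂ g (x + y * I)) :
    ∀ᶠ t : ℝ in 𝓝 x, HasDerivAt (fun s : ℝ => g (s + y * I)) (deriv g (t + y * I)) t := by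
  have hline : Tendsto (fun t : ℝ => (t : ℂ) + y * I) (𝓝 x) (𝓝 (x + y * I)) :=
    (by fun_prop : Continuous fun t : ℝ => (t : ℂ) + y * I).tendsto x
  exact (hline.eventually hg.eventually_analyticAt).mono fun t ht =>
    ht.differentiableAt.hasDerivAt.comp_horizontal

theorem AnalyticAt.eventually_hasDerivAt_vertical (hg : AnalyticAt ℂ g (x + y * I)) :
    ∀ᶠ t : ℝ in 𝓝 y, HasDerivAt (fun s : ℝ => g (x + s * I)) (deriv g (x + t * I) * I) t := by
  have hline : Tendsto (fun t : ℝ => (x : ℂ) + t * I) (𝓝 y) (𝓝 (x + y * I)) :=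
    (by fun_prop : Continuous fun t : ℝ => (x : ℂ) + t * I).tendsto y
  exact (hline.eventually hg.eventually_analyticAt).mono fun t ht =>
    ht.differentiableAt.hasDerivAt.comp_vertical

end Lines

theorem hypLaplacian_div_im_add (κ : ℝ) {A B : ℂ → ℂ} {z : ℂ} (hA : AnalyticAt ℂ A z)
    (hB : AnalyticAt ℂ B z) (hy : z.im ≠ 0) :
    hypLaplacian κ (fun w => A w / w.im + B w) z = 2 * I * deriv A z + (κ - 2) * A z / z.im := by
  obtain ⟨x, y, rfl⟩ : ∃ x y : ℝ, z = x + y * I := ⟨z.re, z.im, (re_add_im z).symm⟩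
  have hre : ∀ a b : ℝ, ((a : ℂ) + b * I).re = a := by simp
  have him : ∀ a b : ℝ, ((a : ℂ) + b * I).im = b := by simp
  simp only [hypLaplacian, hre, him] at hy ⊢
  have hofReal : ∀ t : ℝ, HasDerivAt (fun s : ℝ => (s : ℂ)) 1 t := fun t => by
    simpa using (hasDerivAt_id t).ofReal_comp
  have hH1 : ∀ᶠ t : ℝ in 𝓝 x, HasDerivAt (fun s : ℝ => A (s + y * I) / y + B (s + y * I))
      (deriv A (t + y * I) / y + deriv B (t + y * I)) t :=
    (hA.eventually_hasDerivAt_horizontal.and hB.eventually_hasDerivAt_horizontal).mono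
      fun t ht => (ht.1.div_const (y : ℂ)).add ht.2
  have hH2 := (hA.deriv.eventually_hasDerivAt_horizontal.self_of_nhds.div_const (y : ℂ)).add
    hB.deriv.eventually_hasDerivAt_horizontal.self_of_nhds
  have hV1 : ∀ᶠ t : ℝ in 𝓝 y, HasDerivAt (fun s : ℝ => A (x + s * I) / s + B (x + s * I))
      ((deriv A (x + t * I) * I * t - A (x + t * I)) / t ^ 2 + deriv B (x + t * I) * I) t :=
    ((hA.eventually_hasDerivAt_vertical.and hB.eventually_hasDerivAt_vertical).and
      (eventually_ne_nhds hy)).mono fun t ht =>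
        ((ht.1.1.div (hofReal t) (ofReal_ne_zero.2 ht.2)).add ht.1.2).congr_deriv (by ring)
  have hV2 := ((((hA.deriv.eventually_hasDerivAt_vertical.self_of_nhds.mul_const I).mul
    (hofReal y)).sub hA.eventually_hasDerivAt_vertical.self_of_nhds).div ((hofReal y).pow 2)
    (pow_ne_zero 2 (ofReal_ne_zero.2 hy))).add
    (hB.deriv.eventually_hasDerivAt_vertical.self_of_nhds.mul_const I)
  rw [iteratedDeriv_two_eq_of_hasDerivAt hH1 hH2, iteratedDeriv_two_eq_of_hasDerivAt hV1 hV2,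
    hH1.self_of_nhds.deriv, hV1.self_of_nhds.deriv]
  simp only [Pi.pow_apply, Pi.mul_apply, Pi.sub_apply]
  have hy' : (y : ℂ) ≠ 0 := ofReal_ne_zero.2 hy
  field_simp
  ring_nf
  simp only [I_sq, I_pow_three]
  ring

theorem Filter.EventuallyEq.hypLaplacian_eq (κ : ℝ) {f g : ℂ → ℂ} {z : ℂ} (hfg : f =ᶠ[𝓝 z] g) :
    hypLaplacian κ f z = hypLaplacian κ g z := by
  have hH : Tendsto (fun t : ℝ => (t : ℂ) + z.im * I) (𝓝 z.re) (𝓝 z) := by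
    simpa using (by fun_prop : Continuous fun t : ℝ => (t : ℂ) + z.im * I).tendsto z.re
  have hV : Tendsto (fun t : ℝ => (z.re : ℂ) + t * I) (𝓝 z.im) (𝓝 z) := by
    simpa using (by fun_prop : Continuous fun t : ℝ => (z.re : ℂ) + t * I).tendsto z.im
  have hfgH : (fun t : ℝ => f (t + z.im * I)) =ᶠ[𝓝 z.re] fun t => g (t + z.im * I) :=
    hH.eventually hfg
  have hfgV : (fun t : ℝ => f (z.re + t * I)) =ᶠ[𝓝 z.im] fun t => g (z.re + t * I) :=
    hV.eventually hfg
  simp only [hypLaplacian, hfgH.iteratedDeriv_eq, hfgV.iteratedDeriv_eq, hfgH.deriv_eq,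
    hfgV.deriv_eq]

section Quadratic

variable (a b c : ℝ)

theorem hasDerivAt_Qc (w : ℂ) : HasDerivAt (Qc a b c) (2 * a * w + b) w := by
  have h := (((hasDerivAt_pow 2 w).const_mul (a : ℂ)).add
    ((hasDerivAt_id w).const_mul (b : ℂ))).add_const (c : ℂ)
  exact h.congr_deriv (by push_cast; ring)

theorem analyticAt_Qc (w : ℂ) : AnalyticAt ℂ (Qc a b c) w := by
  unfold Qc; fun_prop

theorem Qzq_mul_im {w : ℂ} (hw : w.im ≠ 0) :
    (Qzq a b c w : ℂ) * w.im = Qc a b c w - I * w.im * (2 * a * w + b) := by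
  obtain ⟨x, y, rfl⟩ : ∃ x y : ℝ, w = x + y * I := ⟨w.re, w.im, (re_add_im w).symm⟩
  have hre : ((x : ℂ) + y * I).re = x := by simp
  have him : ((x : ℂ) + y * I).im = y := by simp
  have hnorm : ‖(x : ℂ) + y * I‖ ^ 2 = x ^ 2 + y ^ 2 := by
    rw [Complex.sq_norm, normSq_add_mul_I]
  have hy : (y : ℂ) ≠ 0 := ofReal_ne_zero.2 (him ▸ hw)
  rw [Qzq, Qc, hre, him, hnorm]
  push_cast
  field_simp
  linear_combination (a * y ^ 2) * I_sq

theorem Qzq_div_Qc_pow {w : ℂ} (hw : w.im ≠ 0) (hQ : Qc a b c w ≠ 0) (k : ℕ) :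
    (Qzq a b c w : ℂ) / Qc a b c w ^ (k + 1)
      = Qc a b c w ^ (-(k : ℤ)) / w.im + -I * (2 * a * w + b) * Qc a b c w ^ (-(k : ℤ) - 1) := by
  have hpow : Qc a b c w ^ (-(k : ℤ) - 1) = (Qc a b c w ^ (k + 1))⁻¹ := by
    rw [← zpow_natCast, ← zpow_neg]; push_cast; ring_nf
  have hpow' : Qc a b c w ^ (-(k : ℤ)) = Qc a b c w * (Qc a b c w ^ (k + 1))⁻¹ := by
    rw [← hpow, ← zpow_one_add₀ hQ]; ring_nf
  have hy : (w.im : ℂ) ≠ 0 := ofReal_ne_zero.2 hw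
  rw [hpow, hpow']
  field_simp
  linear_combination Qzq_mul_im a b c hw

end Quadratic

theorem stmt13_general (a b c : ℝ) (k : ℕ) (z : ℂ) (hz : 0 < z.im)
    (hQ : Qc a b c z ≠ 0) :
    hypLaplacian (2 * k + 2)
        (fun w : ℂ => (Qzq a b c w : ℂ) / (Qc a b c w) ^ (k + 1)) z
      = 2 * (k : ℂ) * ((Qzq a b c z : ℂ) / (Qc a b c z) ^ (k + 1)) := by
  set A : ℂ → ℂ := fun w => Qc a b c w ^ (-(k : ℤ))
  set B : ℂ → ℂ := fun w => -I * (2 * a * w + b) * Qc a b c w ^ (-(k : ℤ) - 1)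
  have hdecomp : (fun w : ℂ => (Qzq a b c w : ℂ) / Qc a b c w ^ (k + 1))
      =ᶠ[𝓝 z] fun w => A w / w.im + B w :=
    ((continuous_im.continuousAt.eventually_ne hz.ne').and
      ((analyticAt_Qc a b c z).continuousAt.eventually_ne hQ)).mono
      fun w hw => Qzq_div_Qc_pow a b c hw.1 hw.2 k
  have hA : AnalyticAt ℂ A z := (analyticAt_Qc a b c z).zpow hQ
  have hB : AnalyticAt ℂ B z :=
    (analyticAt_const.mul ((analyticAt_const.mul analyticAt_id).add analyticAt_const)).mul
      ((analyticAt_Qc a b c z).zpow hQ)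
  have hA_deriv : HasDerivAt A (-k * Qc a b c z ^ (-(k : ℤ) - 1) * (2 * a * z + b)) z :=
    ((hasDerivAt_zpow _ _ (Or.inl hQ)).comp z (hasDerivAt_Qc a b c z)).congr_deriv
      (by push_cast; ring)
  rw [hdecomp.hypLaplacian_eq, hypLaplacian_div_im_add _ hA hB hz.ne', hA_deriv.deriv,
    Qzq_div_Qc_pow a b c hz.ne' hQ k]
  push_cast
  ring

theorem stmt13 (a b c : ℝ) (k : ℕ) (hk : 0 < k) (z : ℂ) (hz : 0 < z.im)
    (hQ : Qc a b c z ≠ 0) (hQbar : Qc a b c (starRingEnd ℂ z) ≠ 0) :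
    hypLaplacian (2 * k + 2)
        (fun w : ℂ => (Qzq a b c w : ℂ) / (Qc a b c w) ^ (k + 1)) z
      = 2 * (k : ℂ) * ((Qzq a b c z : ℂ) / (Qc a b c z) ^ (k + 1)) :=
  stmt13_general a b c k z hz hQ
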